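/- arXiv:2402.09838 — 4 statements merged into one kernel-verified Lean document; each statement's English description precedes it below -/
import Mathlib

section
/- Suppose the response maps 𝒫 and ℛ satisfy the sensitivity assumption with constants ι_p, ι_r, ε_{p,p}, ε_{p,r}, ε_{r,p}, ε_{r,r}, set ι := ι_p + ι_r, ε_p := ε_{p,p} + ε_{r,p}, ε_r := ε_{p,r} + ε_{r,r}, and assume max(ε_p, ε_r) < 1. Let d and d' be occupancy measures, and let (P, r) and (P', r') be fixed points of the corresponding repeated-deployment maps, i.e. P = 𝒫(d, P, r), r = ℛ(d, P, r), P' = 𝒫(d', P', r'), r' = ℛ(d', P', r'). Then ‖P − P'‖₂ + ‖r − r'‖₂ ≤ (ι / (1 − max(ε_p, ε_r))) · ‖d − d'‖₂. -/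
/-- If the response maps satisfy the sensitivity assumption with
`max ε_p ε_r < 1`, and `(P, r)` resp. `(P', r')` are the fixed points of the
repeated-deployment maps for occupancy measures `d` resp. `d'`, then
`‖P - P'‖₂ + ‖r - r'‖₂ ≤ ι / (1 - max ε_p ε_r) · ‖d - d'‖₂`. -/
theorem fixed_point_environment_lipschitz
    {S A : Type*} [Fintype S] [Fintype A] [Nonempty S] [Nonempty A]
    (Pmap : EuclideanSpace ℝ (S × A) → EuclideanSpace ℝ (S × A × S) →
      EuclideanSpace ℝ (S × A) → EuclideanSpace ℝ (S × A × S))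
    (Rmap : EuclideanSpace ℝ (S × A) → EuclideanSpace ℝ (S × A × S) →
      EuclideanSpace ℝ (S × A) → EuclideanSpace ℝ (S × A))
    (ιp ιr εpp εpr εrp εrr : ℝ)
    (hιp : 0 ≤ ιp) (hιr : 0 ≤ ιr) (hεpp : 0 ≤ εpp) (hεpr : 0 ≤ εpr)
    (hεrp : 0 ≤ εrp) (hεrr : 0 ≤ εrr)
    (hsensP : ∀ d P r d' P' r',
      ‖Pmap d P r - Pmap d' P' r'‖ ≤ ιp * ‖d - d'‖ + εpp * ‖P - P'‖ + εpr * ‖r - r'‖)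
    (hsensR : ∀ d P r d' P' r',
      ‖Rmap d P r - Rmap d' P' r'‖ ≤ ιr * ‖d - d'‖ + εrp * ‖P - P'‖ + εrr * ‖r - r'‖)
    (hε : max (εpp + εrp) (εpr + εrr) < 1)
    (d d' : EuclideanSpace ℝ (S × A))
    (P P' : EuclideanSpace ℝ (S × A × S)) (r r' : EuclideanSpace ℝ (S × A))
    (hPfix : P = Pmap d P r) (hrfix : r = Rmap d P r)
    (hPfix' : P' = Pmap d' P' r') (hrfix' : r' = Rmap d' P' r') :
    ‖P - P'‖ + ‖r - r'‖ ≤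
      (ιp + ιr) / (1 - max (εpp + εrp) (εpr + εrr)) * ‖d - d'‖ := by
  set M := max (εpp + εrp) (εpr + εrr) with hM
  have hx : ‖P - P'‖ ≤ ιp * ‖d - d'‖ + εpp * ‖P - P'‖ + εpr * ‖r - r'‖ := by
    calc ‖P - P'‖ = ‖Pmap d P r - Pmap d' P' r'‖ := by rw [← hPfix, ← hPfix']
      _ ≤ _ := hsensP d P r d' P' r'
  have hy : ‖r - r'‖ ≤ ιr * ‖d - d'‖ + εrp * ‖P - P'‖ + εrr * ‖r - r'‖ := by
    calc ‖r - r'‖ = ‖Rmap d P r - Rmap d' P' r'‖ := by rw [← hrfix, ← hrfix']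
      _ ≤ _ := hsensR d P r d' P' r'
  have hxn : 0 ≤ ‖P - P'‖ := norm_nonneg _
  have hyn : 0 ≤ ‖r - r'‖ := norm_nonneg _
  have h1 : εpp + εrp ≤ M := le_max_left _ _
  have h2 : εpr + εrr ≤ M := le_max_right _ _
  have hsum : ‖P - P'‖ + ‖r - r'‖ ≤
      (ιp + ιr) * ‖d - d'‖ + M * (‖P - P'‖ + ‖r - r'‖) := by
    nlinarith [mul_le_mul_of_nonneg_right h1 hxn, mul_le_mul_of_nonneg_right h2 hyn]
  have hden : 0 < 1 - M := by linarith
  rw [div_mul_eq_mul_div, le_div_iff₀ hden]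
  nlinarith
end

section
/- Suppose the response maps 𝒫 and ℛ satisfy the sensitivity assumption, set ε_p := ε_{p,p} + ε_{r,p}, ε_r := ε_{p,r} + ε_{r,r}, ε := max(ε_p, ε_r), and assume 0 < ε < 1. Fix an occupancy measure d and an initial environment (P₀, r₀), and define the repeated-deployment sequence by P_{t+1} = 𝒫(d, P_t, r_t) and r_{t+1} = ℛ(d, P_t, r_t). Let (P_d, r_d) be a fixed point of this map, i.e. P_d = 𝒫(d, P_d, r_d) and r_d = ℛ(d, P_d, r_d). Assume dist((P₀, r₀), (P₁, r₁)) > 0. Then for every ν > 0 and every natural number k with k ≥ ln(dist((P₀, r₀), (P₁, r₁))/ν) / ln(1/ε), it holds that ‖P_k − P_d‖₂ + ‖r_k − r_d‖₂ ≤ ν/(1 − ε). -/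
/-!
For the `ℓ¹` distance `‖P - P'‖ + ‖r - r'‖`, the sensitivity bounds make the simultaneous update
`(P, r) ↦ (𝒫(d, P, r), ℛ(d, P, r))` an `ε`-contraction: the coefficient of `‖P - P'‖` in the
sum of the two bounds is `ε_{p,p} + ε_{r,p} ≤ ε`, that of `‖r - r'‖` is `ε_{p,r} + ε_{r,r} ≤ ε`.
The a priori estimate of the Banach fixed-point theorem bounds the distance of the `k`-th iterate
to the fixed point by `ε ^ k * dist((P₀, r₀), (P₁, r₁)) / (1 - ε)`, and the choice of `k` makes
the numerator at most `ν`.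
-/

open Function

section JointMap

variable {E F : Type*}

def jointMap (f : E → F → E) (g : E → F → F) (z : WithLp 1 (E × F)) : WithLp 1 (E × F) :=
  WithLp.toLp 1 (f z.fst z.snd, g z.fst z.snd)

theorem iterate_jointMap (f : E → F → E) (g : E → F → F) {x : ℕ → E} {y : ℕ → F}
    (hx : ∀ t, x (t + 1) = f (x t) (y t)) (hy : ∀ t, y (t + 1) = g (x t) (y t)) (t : ℕ) :
    (jointMap f g)^[t] (WithLp.toLp 1 (x 0, y 0)) = WithLp.toLp 1 (x t, y t) := by
  induction t with
  | zero => rfl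
  | succ t ih => rw [iterate_succ_apply', ih, hx, hy]; rfl

variable [SeminormedAddCommGroup E] [SeminormedAddCommGroup F]

theorem dist_toLp_prod_of_L1 (x x' : E) (y y' : F) :
    dist (WithLp.toLp 1 (x, y)) (WithLp.toLp 1 (x', y')) = ‖x - x'‖ + ‖y - y'‖ := by
  rw [WithLp.prod_dist_eq_of_L1, dist_eq_norm, dist_eq_norm]
  rfl

theorem dist_jointMap_le {f : E → F → E} {g : E → F → F} {a b c e K : ℝ}
    (hf : ∀ x y x' y', ‖f x y - f x' y'‖ ≤ a * ‖x - x'‖ + b * ‖y - y'‖)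
    (hg : ∀ x y x' y', ‖g x y - g x' y'‖ ≤ c * ‖x - x'‖ + e * ‖y - y'‖)
    (hac : a + c ≤ K) (hbe : b + e ≤ K) (z w : WithLp 1 (E × F)) :
    dist (jointMap f g z) (jointMap f g w) ≤ K * dist z w := by
  rw [jointMap, jointMap, dist_toLp_prod_of_L1, WithLp.prod_dist_eq_of_L1, dist_eq_norm, dist_eq_norm]
  have hx := norm_nonneg (z.fst - w.fst)
  have hy := norm_nonneg (z.snd - w.snd)
  nlinarith [hf z.fst z.snd w.fst w.snd, hg z.fst z.snd w.fst w.snd]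

end JointMap

theorem pow_mul_le_of_log_div_le {ε a b : ℝ} {k : ℕ} (hε0 : 0 < ε) (hε1 : ε < 1)
    (ha : 0 < a) (hb : 0 < b) (hk : Real.log (a / b) / Real.log (1 / ε) ≤ k) :
    ε ^ k * a ≤ b := by
  have hlog : 0 < Real.log (1 / ε) := Real.log_pos ((one_lt_div hε0).mpr hε1)
  have hk' : Real.log a - Real.log b ≤ k * -Real.log ε := by
    rwa [div_le_iff₀ hlog, Real.log_div ha.ne' hb.ne', one_div, Real.log_inv] at hk
  rw [← Real.log_le_log_iff (by positivity) hb, Real.log_mul (by positivity) ha.ne',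
    Real.log_pow]
  linarith

theorem repeated_deployment_convergence_general
    {S A : Type*} [Fintype S] [Fintype A]
    (Pmap : EuclideanSpace ℝ (S × A) → EuclideanSpace ℝ (S × A × S) →
      EuclideanSpace ℝ (S × A) → EuclideanSpace ℝ (S × A × S))
    (Rmap : EuclideanSpace ℝ (S × A) → EuclideanSpace ℝ (S × A × S) →
      EuclideanSpace ℝ (S × A) → EuclideanSpace ℝ (S × A))
    (ιp ιr εpp εpr εrp εrr : ℝ)
    (hsensP : ∀ d P r d' P' r',
      ‖Pmap d P r - Pmap d' P' r'‖ ≤ ιp * ‖d - d'‖ + εpp * ‖P - P'‖ + εpr * ‖r - r'‖)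
    (hsensR : ∀ d P r d' P' r',
      ‖Rmap d P r - Rmap d' P' r'‖ ≤ ιr * ‖d - d'‖ + εrp * ‖P - P'‖ + εrr * ‖r - r'‖)
    (ε : ℝ) (hεdef : ε = max (εpp + εrp) (εpr + εrr))
    (hε0 : 0 < ε) (hε1 : ε < 1)
    (d : EuclideanSpace ℝ (S × A))
    (P : ℕ → EuclideanSpace ℝ (S × A × S)) (r : ℕ → EuclideanSpace ℝ (S × A))
    (hPseq : ∀ t, P (t + 1) = Pmap d (P t) (r t))
    (hrseq : ∀ t, r (t + 1) = Rmap d (P t) (r t))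
    (Pd : EuclideanSpace ℝ (S × A × S)) (rd : EuclideanSpace ℝ (S × A))
    (hPdfix : Pd = Pmap d Pd rd) (hrdfix : rd = Rmap d Pd rd)
    (hpos : 0 < ‖P 0 - P 1‖ + ‖r 0 - r 1‖)
    (ν : ℝ) (hν : 0 < ν) (k : ℕ)
    (hk : (k : ℝ) ≥
      Real.log ((‖P 0 - P 1‖ + ‖r 0 - r 1‖) / ν) / Real.log (1 / ε)) :
    ‖P k - Pd‖ + ‖r k - rd‖ ≤ ν / (1 - ε) := by
  set T := jointMap (Pmap d) (Rmap d)
  set K : NNReal := ⟨ε, hε0.le⟩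
  have hT : ContractingWith K T :=
    ⟨by exact_mod_cast hε1, LipschitzWith.of_dist_le_mul <| dist_jointMap_le
      (fun P r P' r' => by simpa using hsensP d P r d P' r')
      (fun P r P' r' => by simpa using hsensR d P r d P' r')
      (hεdef ▸ le_max_left _ _) (hεdef ▸ le_max_right _ _)⟩
  have hfix : IsFixedPt T (WithLp.toLp 1 (Pd, rd)) := by
    change WithLp.toLp 1 (Pmap d Pd rd, Rmap d Pd rd) = _
    rw [← hPdfix, ← hrdfix]
  have hiter := iterate_jointMap (Pmap d) (Rmap d) hPseq hrseq
  have hrate := hT.apriori_dist_iterate_fixedPoint_le (WithLp.toLp 1 (P 0, r 0)) k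
  rw [← hT.fixedPoint_unique hfix, hiter, ← iterate_one T, hiter, dist_toLp_prod_of_L1,
    dist_toLp_prod_of_L1] at hrate
  refine hrate.trans ?_
  rw [mul_comm]
  exact div_le_div_of_nonneg_right (pow_mul_le_of_log_div_le hε0 hε1 hpos hν hk)
    (sub_pos.mpr hε1).le

/-- Repeated deployment of a fixed occupancy measure `d`: after
`k ≥ ln(dist((P₀,r₀),(P₁,r₁))/ν) / ln(1/ε)` rounds, the environment is within
`ν/(1-ε)` of the limit environment `(P_d, r_d)`. -/
theorem repeated_deployment_convergence
    {S A : Type*} [Fintype S] [Fintype A] [Nonempty S] [Nonempty A]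
    (Pmap : EuclideanSpace ℝ (S × A) → EuclideanSpace ℝ (S × A × S) →
      EuclideanSpace ℝ (S × A) → EuclideanSpace ℝ (S × A × S))
    (Rmap : EuclideanSpace ℝ (S × A) → EuclideanSpace ℝ (S × A × S) →
      EuclideanSpace ℝ (S × A) → EuclideanSpace ℝ (S × A))
    (ιp ιr εpp εpr εrp εrr : ℝ)
    (hιp : 0 ≤ ιp) (hιr : 0 ≤ ιr) (hεpp : 0 ≤ εpp) (hεpr : 0 ≤ εpr)
    (hεrp : 0 ≤ εrp) (hεrr : 0 ≤ εrr)
    (hsensP : ∀ d P r d' P' r',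
      ‖Pmap d P r - Pmap d' P' r'‖ ≤ ιp * ‖d - d'‖ + εpp * ‖P - P'‖ + εpr * ‖r - r'‖)
    (hsensR : ∀ d P r d' P' r',
      ‖Rmap d P r - Rmap d' P' r'‖ ≤ ιr * ‖d - d'‖ + εrp * ‖P - P'‖ + εrr * ‖r - r'‖)
    (ε : ℝ) (hεdef : ε = max (εpp + εrp) (εpr + εrr))
    (hε0 : 0 < ε) (hε1 : ε < 1)
    (d : EuclideanSpace ℝ (S × A))
    (P : ℕ → EuclideanSpace ℝ (S × A × S)) (r : ℕ → EuclideanSpace ℝ (S × A))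
    (hPseq : ∀ t, P (t + 1) = Pmap d (P t) (r t))
    (hrseq : ∀ t, r (t + 1) = Rmap d (P t) (r t))
    (Pd : EuclideanSpace ℝ (S × A × S)) (rd : EuclideanSpace ℝ (S × A))
    (hPdfix : Pd = Pmap d Pd rd) (hrdfix : rd = Rmap d Pd rd)
    (hpos : 0 < ‖P 0 - P 1‖ + ‖r 0 - r 1‖)
    (ν : ℝ) (hν : 0 < ν) (k : ℕ)
    (hk : (k : ℝ) ≥
      Real.log ((‖P 0 - P 1‖ + ‖r 0 - r 1‖) / ν) / Real.log (1 / ε)) :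
    ‖P k - Pd‖ + ‖r k - rd‖ ≤ ν / (1 - ε) :=
  repeated_deployment_convergence_general Pmap Rmap ιp ιr εpp εpr εrp εrr hsensP hsensR ε hεdef hε0
    hε1 d P r hPseq hrseq Pd rd hPdfix hrdfix hpos ν hν k hk
end

section
/- Let S and A be finite nonempty sets, γ ∈ (0, 1), ρ : S → ℝ an initial state distribution (ρ ≥ 0 and Σ_s ρ(s) = 1), P a transition function with P(s,a,·) a probability distribution over S for each (s,a), r : S × A → ℝ a reward function, and λ > 0. Let 𝒞(P) := { d : S × A → ℝ : d ≥ 0 and Σ_a d(s,a) = ρ(s) + γ·Σ_{s',a} d(s',a)·P(s',a,s) for all s ∈ S }. If d_S ∈ 𝒞(P) maximizes Σ_{s,a} d(s,a)·r(s,a) − (λ/2)·‖d‖₂² over 𝒞(P), then for every d ∈ 𝒞(P): Σ_{s,a} r(s,a)·d_S(s,a) ≥ Σ_{s,a} r(s,a)·d(s,a) − λ/(2(1−γ)²). -/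
/-- The set of occupancy measures feasible with respect to transition
function `P` (Bellman flow constraints). -/
def Feas {S A : Type*} [Fintype S] [Fintype A]
    (γ : ℝ) (ρ : S → ℝ) (P : EuclideanSpace ℝ (S × A × S)) :
    Set (EuclideanSpace ℝ (S × A)) :=
  {d | (∀ s a, 0 ≤ d (s, a)) ∧
    ∀ s, ∑ a, d (s, a) = ρ s + γ * ∑ s' : S, ∑ a : A, d (s', a) * P (s', a, s)}

lemma feas_total_mass {S A : Type*} [Fintype S] [Fintype A]
    (γ : ℝ) (hγ : γ ∈ Set.Ioo (0 : ℝ) 1)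
    (ρ : S → ℝ) (hρ1 : ∑ s, ρ s = 1)
    (P : EuclideanSpace ℝ (S × A × S))
    (hP1 : ∀ s a, ∑ s', P (s, a, s') = 1)
    (d : EuclideanSpace ℝ (S × A)) (hd : d ∈ Feas γ ρ P) :
    ∑ q : S × A, d q = 1 / (1 - γ) := by
  have key : ∑ s : S, ∑ a : A, d (s, a) =
      1 + γ * ∑ s : S, ∑ a : A, d (s, a) := by
    calc ∑ s : S, ∑ a : A, d (s, a)
        = ∑ s : S, (ρ s + γ * ∑ s' : S, ∑ a : A, d (s', a) * P (s', a, s)) := by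
          exact Finset.sum_congr rfl fun s _ => hd.2 s
      _ = 1 + γ * ∑ s : S, ∑ s' : S, ∑ a : A, d (s', a) * P (s', a, s) := by
          rw [Finset.sum_add_distrib, hρ1, ← Finset.mul_sum]
      _ = 1 + γ * ∑ s : S, ∑ a : A, d (s, a) := by
          congr 2
          calc ∑ s : S, ∑ s' : S, ∑ a : A, d (s', a) * P (s', a, s)
              = ∑ s' : S, ∑ s : S, ∑ a : A, d (s', a) * P (s', a, s) :=
                Finset.sum_comm
            _ = ∑ s' : S, ∑ a : A, ∑ s : S, d (s', a) * P (s', a, s) :=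
                Finset.sum_congr rfl fun _ _ => Finset.sum_comm
            _ = ∑ s' : S, ∑ a : A, d (s', a) := by
                refine Finset.sum_congr rfl fun s' _ =>
                  Finset.sum_congr rfl fun a _ => ?_
                rw [← Finset.mul_sum, hP1, mul_one]
  have h1γ : (1 : ℝ) - γ ≠ 0 := by
    have := hγ.2; linarith
  have : (1 - γ) * ∑ s : S, ∑ a : A, d (s, a) = 1 := by ring_nf; linarith [key]
  have hsum : ∑ s : S, ∑ a : A, d (s, a) = 1 / (1 - γ) := by
    field_simp at this ⊢; linarith
  rw [← hsum, ← Fintype.sum_prod_type]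

/-- Approximating the unregularized objective: if `d_S` maximizes the
`λ`-regularized objective over `𝒞(P)`, then `d_S` is within `λ/(2(1-γ)²)` of
the unregularized optimum over `𝒞(P)`. -/
theorem regularized_maximizer_approximates_unregularized
    {S A : Type*} [Fintype S] [Fintype A] [Nonempty S] [Nonempty A]
    (γ : ℝ) (hγ : γ ∈ Set.Ioo (0 : ℝ) 1)
    (ρ : S → ℝ) (hρ0 : ∀ s, 0 ≤ ρ s) (hρ1 : ∑ s, ρ s = 1)
    (P : EuclideanSpace ℝ (S × A × S))
    (hP0 : ∀ s a s', 0 ≤ P (s, a, s')) (hP1 : ∀ s a, ∑ s', P (s, a, s') = 1)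
    (r : EuclideanSpace ℝ (S × A))
    (lam : ℝ) (hlam : 0 < lam)
    (dS : EuclideanSpace ℝ (S × A)) (hdS : dS ∈ Feas γ ρ P)
    (hmax : ∀ d ∈ Feas γ ρ P,
      (∑ q : S × A, d q * r q) - lam / 2 * ‖d‖ ^ 2 ≤
        (∑ q : S × A, dS q * r q) - lam / 2 * ‖dS‖ ^ 2) :
    ∀ d ∈ Feas γ ρ P,
      (∑ q : S × A, r q * dS q) ≥
        (∑ q : S × A, r q * d q) - lam / (2 * (1 - γ) ^ 2) := by
  intro d hd
  have hnd0 : ∀ q : S × A, 0 ≤ d q := fun q => hd.1 q.1 q.2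
  have hnormsq : ‖d‖ ^ 2 = ∑ q : S × A, d q ^ 2 := by
    rw [EuclideanSpace.norm_eq, Real.sq_sqrt (by positivity)]
    simp [sq_abs]
  have hmass : ∑ q : S × A, d q = 1 / (1 - γ) := feas_total_mass γ hγ ρ hρ1 P hP1 d hd
  have hsq : ‖d‖ ^ 2 ≤ (1 / (1 - γ)) ^ 2 := by
    rw [hnormsq, ← hmass]
    exact Finset.sum_sq_le_sq_sum_of_nonneg (fun q _ => hnd0 q)
  have h1γ : (0 : ℝ) < 1 - γ := by have := hγ.2; linarith
  have hmaxd := hmax d hd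
  have hcomm : ∀ e : EuclideanSpace ℝ (S × A),
      (∑ q : S × A, r q * e q) = ∑ q : S × A, e q * r q := fun e =>
    Finset.sum_congr rfl fun q _ => mul_comm _ _
  rw [hcomm d, hcomm dS]
  have hnormS : 0 ≤ lam / 2 * ‖dS‖ ^ 2 := by positivity
  have hbound : lam / 2 * ‖d‖ ^ 2 ≤ lam / (2 * (1 - γ) ^ 2) := by
    have : lam / 2 * ‖d‖ ^ 2 ≤ lam / 2 * (1 / (1 - γ)) ^ 2 := by
      apply mul_le_mul_of_nonneg_left hsq (by positivity)
    calc lam / 2 * ‖d‖ ^ 2 ≤ lam / 2 * (1 / (1 - γ)) ^ 2 := this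
      _ = lam / (2 * (1 - γ) ^ 2) := by field_simp
  linarith
end

section
/- Let ε ∈ (0, 1), let v > 0 with v·ε > 1, and let z > 0. Then for every natural number k ≥ 1 with k > ( ln(ε·(v−1)/(v·ε−1)) + ln(1/z) ) / ln(1/ε), it holds that (v^k·ε^{k+1}·(v−1) − v·ε + ε) / (v^k·(v·ε − 1) − v·ε + 1) < z. -/
/-- For `ε ∈ (0,1)`, `v·ε > 1` and `z > 0`: if
`k > (ln(ε(v−1)/(vε−1)) + ln(1/z)) / ln(1/ε)` with `k ≥ 1`, then
`(v^k ε^{k+1}(v−1) − vε + ε) / (v^k(vε−1) − vε + 1) < z`. -/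
theorem geometric_weight_ratio_lt
    (ε v z : ℝ) (hε : ε ∈ Set.Ioo (0 : ℝ) 1) (hv : 0 < v) (hvε : 1 < v * ε)
    (hz : 0 < z) (k : ℕ) (hk1 : 1 ≤ k)
    (hk : (k : ℝ) >
      (Real.log (ε * (v - 1) / (v * ε - 1)) + Real.log (1 / z)) /
        Real.log (1 / ε)) :
    (v ^ k * ε ^ (k + 1) * (v - 1) - v * ε + ε) /
        (v ^ k * (v * ε - 1) - v * ε + 1) < z := by
  obtain ⟨hε0, hε1⟩ := hε
  have hv1 : 1 < v := by nlinarith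
  have hvε1 : 0 < v * ε - 1 := by linarith
  have hv1' : 0 < v - 1 := by linarith
  have hvk : 1 < v ^ k := one_lt_pow₀ hv1 (by omega)
  have hA : 0 < ε ^ (k + 1) * (v - 1) / (v * ε - 1) := by positivity
  have hlog : Real.log (ε ^ (k + 1) * (v - 1) / (v * ε - 1)) < Real.log z := by
    have h1 : Real.log (1 / ε) = -Real.log ε := by rw [one_div, Real.log_inv]
    have h2 : Real.log (1 / z) = -Real.log z := by rw [one_div, Real.log_inv]
    have h3 : Real.log (ε * (v - 1) / (v * ε - 1))
        = Real.log ε + Real.log (v - 1) - Real.log (v * ε - 1) := by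
      rw [Real.log_div (by positivity) (ne_of_gt hvε1),
        Real.log_mul (ne_of_gt hε0) (ne_of_gt hv1')]
    have h4 : Real.log (ε ^ (k + 1) * (v - 1) / (v * ε - 1))
        = ((k : ℝ) + 1) * Real.log ε + Real.log (v - 1) - Real.log (v * ε - 1) := by
      rw [Real.log_div (by positivity) (ne_of_gt hvε1),
        Real.log_mul (by positivity) (ne_of_gt hv1'), Real.log_pow]
      push_cast; ring
    have hLpos : 0 < Real.log (1 / ε) := by
      rw [h1]; linarith [Real.log_neg hε0 hε1]
    have hk' : Real.log (ε * (v - 1) / (v * ε - 1)) + Real.log (1 / z)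
        < (k : ℝ) * Real.log (1 / ε) := by
      rw [gt_iff_lt, div_lt_iff₀ hLpos] at hk
      linarith
    rw [h1, h2, h3] at hk'
    rw [h4]; nlinarith [hk']
  have h2 : ε ^ (k + 1) * (v - 1) / (v * ε - 1) < z :=
    (Real.log_lt_log_iff hA hz).mp hlog
  have h2' : ε ^ (k + 1) * (v - 1) < z * (v * ε - 1) :=
    (div_lt_iff₀ hvε1).mp h2
  have hnum : v ^ k * ε ^ (k + 1) * (v - 1) - v * ε + ε
      = ε * ((v - 1) * ((v * ε) ^ k - 1)) := by
    rw [mul_pow, pow_succ]; ring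
  have hden : v ^ k * (v * ε - 1) - v * ε + 1 = (v ^ k - 1) * (v * ε - 1) := by
    ring
  have hεk : ε ^ k < 1 := pow_lt_one₀ hε0.le hε1 (by omega)
  have hεkpos : 0 < ε ^ k := pow_pos hε0 k
  rw [hnum, hden, div_lt_iff₀ (mul_pos (by linarith) hvε1), mul_pow]
  have hstep : v ^ k * ε ^ k - 1 < ε ^ k * (v ^ k - 1) := by nlinarith
  rw [pow_succ] at h2'
  nlinarith [mul_lt_mul_of_pos_left h2' (show (0:ℝ) < v ^ k - 1 by linarith),
    mul_lt_mul_of_pos_left hstep (mul_pos hε0 hv1')]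
end
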